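/- Let μ > 0 and 0 < ρ < 1, set γ = √(1−ρ²), let ν(x) = e^{−x²/2}/√(2π), let He_k denote the probabilists' Hermite polynomial, define Q_N : ℝ → ℝ recursively by Q_0 ≡ 1 and Q_{N+1}(x) = (μ+x) ∫_ℝ Q_N(ρx + γy) ν(y) dy, and set q_{N,k} := (1/√(k!)) ∫_ℝ Q_N(x)·He_k(x) ν(x) dx. Then q_{N,k} ≥ 0 for all integers N ≥ 0 and k ≥ 0. -/

import Mathlib

/-!
Every `Q_N` is a polynomial in the cone spanned by the Hermite polynomials `He_k` with
nonnegative coefficients. Multiplication by `μ + x` preserves this cone because of the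
three-term recurrence `x He_k = He_{k+1} + k He_{k-1}`, and the Gaussian smoothing
`f ↦ ∫ f(ρ x + γ y) dν(y)` preserves it because it multiplies `He_k` by `ρ ^ k` (Mehler).
Finally `q_{N,k}` is a nonnegative combination of the Gaussian inner products
`⟨He_j, He_k⟩ = k! δ_{jk}`. Both Gaussian identities follow from Stein's identity
`E[X p(X)] = E[p'(X)]`.
-/

open MeasureTheory ProbabilityTheory Polynomial
open scoped NNReal Nat

namespace ProbabilityTheory

variable {m : ℝ} {v : ℝ≥0}

lemma integrable_pow_gaussianReal (n : ℕ) :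
    Integrable (fun x : ℝ ↦ x ^ n) (gaussianReal m v) := by
  have h := (memLp_id_gaussianReal' (μ := m) (v := v) n (by simp)).integrable_norm_pow'
  simpa [norm_pow] using (integrable_norm_iff (by fun_prop)).mp (h.congr (by simp [norm_pow]))

lemma integrable_eval_gaussianReal (p : ℝ[X]) :
    Integrable (fun x ↦ p.eval x) (gaussianReal m v) := by
  simp_rw [eval_eq_sum_range]
  exact integrable_finsetSum _ fun i _ ↦ (integrable_pow_gaussianReal i).const_mul _

lemma integrable_gaussianPDFReal_mul {f : ℝ → ℝ} (hv : v ≠ 0)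
    (hf : Integrable f (gaussianReal m v)) : Integrable fun x ↦ gaussianPDFReal m v x * f x := by
  rw [gaussianReal_of_var_ne_zero _ hv, gaussianPDF_def,
    integrable_withDensity_iff_integrable_smul' (by fun_prop) (by simp)] at hf
  simpa [ENNReal.toReal_ofReal (gaussianPDFReal_nonneg _ _ _)] using hf

lemma hasDerivAt_gaussianPDFReal (x : ℝ) :
    HasDerivAt (gaussianPDFReal m v) (-((x - m) / v) * gaussianPDFReal m v x) x := by
  have hexponent : HasDerivAt (fun y ↦ -(y - m) ^ 2 / (2 * v)) (-((x - m) / v)) x := by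
    refine ((((hasDerivAt_id x).sub_const m).pow 2).neg.div_const (2 * (v : ℝ))).congr_deriv ?_
    norm_num [neg_div, mul_div_mul_left _ _ (two_ne_zero' ℝ)]
  refine (hexponent.exp.const_mul (√(2 * Real.pi * v))⁻¹).congr_deriv ?_
  rw [gaussianPDFReal]
  ring

/-- Stein's identity for polynomials. -/
lemma integral_sub_mul_eval_gaussianReal (p : ℝ[X]) :
    ∫ x, (x - m) * p.eval x ∂gaussianReal m v
      = v * ∫ x, (derivative p).eval x ∂gaussianReal m v := by
  rcases eq_or_ne v 0 with rfl | hv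
  · simp
  set pdf := gaussianPDFReal m v
  have hpdf (q : ℝ[X]) : Integrable fun x ↦ pdf x * q.eval x :=
    integrable_gaussianPDFReal_mul hv (integrable_eval_gaussianReal q)
  have hparts := integral_mul_deriv_eq_deriv_mul_of_integrable
    (u := fun x ↦ p.eval x) (u' := fun x ↦ (derivative p).eval x)
    (fun x _ ↦ p.hasDerivAt x) (fun x _ ↦ hasDerivAt_gaussianPDFReal (m := m) (v := v) x)
    ((hpdf (-(C (v : ℝ)⁻¹) * (X - C m) * p)).congr (.of_forall fun x ↦ by simp; ring))
    ((hpdf (derivative p)).congr (.of_forall fun x ↦ by simp; ring))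
    ((hpdf p).congr (.of_forall fun x ↦ by simp; ring))
  have hv' : (v : ℝ) ≠ 0 := by exact_mod_cast hv
  simp only [integral_gaussianReal_eq_integral_smul hv, smul_eq_mul]
  calc ∫ x, pdf x * ((x - m) * p.eval x)
      = -v * ∫ x, p.eval x * (-((x - m) / v) * pdf x) := by
        rw [← integral_const_mul]
        congr 1 with x
        field_simp
    _ = v * ∫ x, pdf x * (derivative p).eval x := by
        rw [hparts]
        simp only [mul_comm (pdf _)]
        ring

end ProbabilityTheory

namespace HermiteCone

noncomputable def He (n : ℕ) : ℝ[X] := (hermite n).map (Int.castRingHom ℝ)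

lemma aeval_hermite (n : ℕ) (x : ℝ) : aeval x (hermite n) = (He n).eval x := by
  rw [aeval_def, He, eval_map]
  rfl

lemma He_zero : He 0 = 1 := by simp [He]

lemma He_succ (n : ℕ) : He (n + 1) = X * He n - derivative (He n) := by
  simp [He, hermite_succ, derivative_map]

lemma He_one : He 1 = X := by simp [He_succ, He_zero]

lemma derivative_He_succ (n : ℕ) : derivative (He (n + 1)) = ((n : ℝ) + 1) • He n := by
  induction n with
  | zero => simp [He_one, He_zero]
  | succ n ih =>
    rw [He_succ (n + 1), derivative_sub, derivative_mul, derivative_X, ih, derivative_smul,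
      He_succ n, mul_smul_comm, one_mul]
    push_cast
    module

lemma X_mul_He_succ (n : ℕ) : X * He (n + 1) = He (n + 2) + ((n : ℝ) + 1) • He n := by
  rw [He_succ (n + 1), derivative_He_succ]
  abel

lemma iterate_derivative_He (m n : ℕ) :
    derivative^[m] (He (n + m)) = ((n + m).descFactorial m : ℝ) • He n := by
  induction m with
  | zero => simp
  | succ m ih =>
    rw [Function.iterate_succ_apply, ← add_assoc, derivative_He_succ, iterate_derivative_smul, ih,
      smul_smul, Nat.succ_descFactorial_succ]
    congr 1
    push_cast
    ring

noncomputable def gaussianExpectation : ℝ[X] →ₗ[ℝ] ℝ where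
  toFun p := ∫ x, p.eval x ∂gaussianReal 0 1
  map_add' p q := by
    simp [integral_add (integrable_eval_gaussianReal p) (integrable_eval_gaussianReal q)]
  map_smul' c p := by simp [integral_const_mul]

local notation "𝔼" => gaussianExpectation

lemma gaussianExpectation_apply (p : ℝ[X]) : 𝔼 p = ∫ x, p.eval x ∂gaussianReal 0 1 := rfl

lemma gaussianExpectation_one : 𝔼 1 = 1 := by simp [gaussianExpectation_apply]

lemma gaussianExpectation_X_mul (p : ℝ[X]) : 𝔼 (X * p) = 𝔼 (derivative p) := by
  simpa [gaussianExpectation_apply] using integral_sub_mul_eval_gaussianReal (m := 0) (v := 1) p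

lemma gaussianExpectation_He_mul (k : ℕ) (p : ℝ[X]) :
    𝔼 (He k * p) = 𝔼 (derivative^[k] p) := by
  induction k generalizing p with
  | zero => simp [He_zero]
  | succ k ih =>
    have hstep : He (k + 1) * p = X * (He k * p) - derivative (He k) * p := by
      rw [He_succ]; ring
    rw [hstep, map_sub, gaussianExpectation_X_mul, derivative_mul, map_add, add_sub_cancel_left,
      ih, Function.iterate_succ_apply]

lemma gaussianExpectation_He (n : ℕ) : 𝔼 (He n) = if n = 0 then 1 else 0 := by
  rcases Nat.eq_zero_or_pos n with rfl | hn
  · simp [He_zero, gaussianExpectation_one]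
  · rw [← mul_one (He n), gaussianExpectation_He_mul, iterate_derivative_one hn, map_zero,
      if_neg hn.ne']

lemma gaussianExpectation_He_mul_He (j k : ℕ) :
    𝔼 (He j * He k) = if j = k then (k ! : ℝ) else 0 := by
  wlog hkj : k ≤ j generalizing j k
  · rw [mul_comm, this k j (by omega), if_neg (by omega), if_neg (by omega)]
  obtain ⟨m, rfl⟩ := Nat.exists_eq_add_of_le' hkj
  rw [mul_comm, gaussianExpectation_He_mul, iterate_derivative_He, map_smul,
    gaussianExpectation_He]
  rcases Nat.eq_zero_or_pos m with rfl | hm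
  · simp [Nat.descFactorial_self]
  · simp [hm.ne']

/-- Mehler's formula. -/
lemma gaussianExpectation_He_comp {ρ γ : ℝ} (hργ : ρ ^ 2 + γ ^ 2 = 1) (x : ℝ) (k : ℕ) :
    𝔼 ((He k).comp (C (ρ * x) + C γ * X)) = ρ ^ k * (He k).eval x := by
  set L := C (ρ * x) + C γ * X
  have hL (p : ℝ[X]) : 𝔼 (L * p) = ρ * x * 𝔼 p + γ * 𝔼 (derivative p) := by
    rw [add_mul, map_add, mul_assoc, C_mul', C_mul', map_smul, map_smul,
      gaussianExpectation_X_mul, smul_eq_mul, smul_eq_mul]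
  induction k using Nat.twoStepInduction with
  | zero => simp [He_zero, gaussianExpectation_one]
  | one => simpa [He_one, He_zero, gaussianExpectation_one] using hL 1
  | more k ih₀ ih₁ =>
    have hcomp :
        (He (k + 2)).comp L = L * (He (k + 1)).comp L - ((k : ℝ) + 1) • (He k).comp L := by
      rw [He_succ (k + 1), sub_comp, mul_comp, X_comp, derivative_He_succ, smul_comp]
    have hderiv : derivative ((He (k + 1)).comp L) = (γ * ((k : ℝ) + 1)) • (He k).comp L := by
      have hdL : derivative L = C γ := by simp [L]
      rw [derivative_comp, hdL, derivative_He_succ, smul_comp, C_mul', smul_smul]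
    have heval :
        (He (k + 2)).eval x = x * (He (k + 1)).eval x - ((k : ℝ) + 1) * (He k).eval x := by
      rw [He_succ (k + 1), derivative_He_succ]
      simp
    rw [hcomp, map_sub, hL, hderiv, map_smul, map_smul, ih₀, ih₁, heval, smul_eq_mul,
      smul_eq_mul]
    linear_combination ((k : ℝ) + 1) * ρ ^ k * (He k).eval x * hργ

/-- The polynomials with nonnegative Hermite–Fourier coefficients. -/
noncomputable def hermiteCone : PointedCone ℝ ℝ[X] := PointedCone.hull ℝ (Set.range He)

lemma He_mem_hermiteCone (k : ℕ) : He k ∈ hermiteCone := PointedCone.subset_hull ⟨k, rfl⟩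

lemma C_add_X_mul_mem_hermiteCone {μ : ℝ} (hμ : 0 ≤ μ) {p : ℝ[X]} (hp : p ∈ hermiteCone) :
    (C μ + X) * p ∈ hermiteCone := by
  suffices hermiteCone ≤ hermiteCone.comap (LinearMap.mulLeft ℝ (C μ + X)) from this hp
  refine Submodule.span_le.2 ?_
  rintro _ ⟨k, rfl⟩
  have hX : X * He k ∈ hermiteCone := by
    cases k with
    | zero => simpa [He_zero, He_one] using He_mem_hermiteCone 1
    | succ k =>
      rw [X_mul_He_succ]
      exact add_mem (He_mem_hermiteCone _)
        (hermiteCone.smul_mem (by positivity) (He_mem_hermiteCone _))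
  simpa [add_mul, C_mul'] using add_mem (hermiteCone.smul_mem hμ (He_mem_hermiteCone k)) hX

lemma gaussianExpectation_mul_He_nonneg {p : ℝ[X]} (hp : p ∈ hermiteCone) (k : ℕ) :
    0 ≤ 𝔼 (p * He k) := by
  suffices hermiteCone ≤ (PointedCone.positive ℝ ℝ).comap (𝔼 ∘ₗ LinearMap.mulRight ℝ (He k)) from
    this hp
  refine Submodule.span_le.2 ?_
  rintro _ ⟨j, rfl⟩
  simp only [SetLike.mem_coe, PointedCone.mem_comap, PointedCone.mem_positive, LinearMap.coe_comp,
    Function.comp_apply, LinearMap.mulRight_apply, gaussianExpectation_He_mul_He]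
  split_ifs <;> positivity

lemma exists_mem_hermiteCone_gaussianExpectation_comp {ρ γ : ℝ} (hρ : 0 ≤ ρ)
    (hργ : ρ ^ 2 + γ ^ 2 = 1) {p : ℝ[X]} (hp : p ∈ hermiteCone) :
    ∃ r ∈ hermiteCone, ∀ x, 𝔼 (p.comp (C (ρ * x) + C γ * X)) = r.eval x := by
  induction hp using Submodule.span_induction with
  | mem _ h =>
    obtain ⟨k, rfl⟩ := h
    exact ⟨ρ ^ k • He k, hermiteCone.smul_mem (by positivity) (He_mem_hermiteCone k),
      fun x ↦ by rw [gaussianExpectation_He_comp hργ, eval_smul, smul_eq_mul]⟩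
  | zero => exact ⟨0, zero_mem _, by simp⟩
  | add p q _ _ hp hq =>
    obtain ⟨r, hr, hpr⟩ := hp
    obtain ⟨s, hs, hqs⟩ := hq
    exact ⟨r + s, add_mem hr hs, fun x ↦ by rw [add_comp, map_add, hpr, hqs, eval_add]⟩
  | smul a p _ hp =>
    obtain ⟨r, hr, hpr⟩ := hp
    refine ⟨a • r, Submodule.smul_mem _ a hr, fun x ↦ ?_⟩
    rw [← Nonneg.coe_smul, ← Nonneg.coe_smul, smul_comp, map_smul, hpr, eval_smul]

end HermiteCone

open HermiteCone in
/-- For `μ > 0` and `0 < ρ < 1`, all Hermite–Fourier coefficients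
`q_{N,k} = (1/√k!) ∫ Q_N·He_k dN(0,1)` of the conditional product moments `Q_N`
are nonnegative (invariance of the nonnegative cone under the transfer operator). -/
theorem hermite_fourier_coefficients_nonneg
    (μ ρ : ℝ) (hμ : 0 < μ) (hρ0 : 0 < ρ) (hρ1 : ρ < 1)
    (γ : ℝ) (hγ : γ = Real.sqrt (1 - ρ ^ 2))
    (Q : ℕ → ℝ → ℝ) (hQ0 : ∀ x, Q 0 x = 1)
    (hQ : ∀ N x, Q (N + 1) x
      = (μ + x) * ∫ y, Q N (ρ * x + γ * y) ∂(gaussianReal 0 1))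
    (q : ℕ → ℕ → ℝ)
    (hq : ∀ N k, q N k = (1 / Real.sqrt (Nat.factorial k))
      * ∫ x, Q N x * (Polynomial.aeval x (Polynomial.hermite k) : ℝ)
          ∂(gaussianReal 0 1)) :
    ∀ N k, 0 ≤ q N k := by
  have hργ : ρ ^ 2 + γ ^ 2 = 1 := by
    rw [hγ, Real.sq_sqrt (by nlinarith)]
    ring
  have hQ_mem : ∀ N, ∃ P ∈ hermiteCone, ∀ x, Q N x = P.eval x := by
    intro N
    induction N with
    | zero => exact ⟨He 0, He_mem_hermiteCone 0, by simp [hQ0, He_zero]⟩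
    | succ N ih =>
      obtain ⟨P, hP, hQP⟩ := ih
      obtain ⟨R, hR, hPR⟩ := exists_mem_hermiteCone_gaussianExpectation_comp hρ0.le hργ hP
      refine ⟨(C μ + X) * R, C_add_X_mul_mem_hermiteCone hμ.le hR, fun x ↦ ?_⟩
      rw [hQ, eval_mul, ← hPR x]
      simp [hQP, gaussianExpectation_apply]
  intro N k
  obtain ⟨P, hP, hQP⟩ := hQ_mem N
  have hcoeff : ∫ x, Q N x * aeval x (hermite k) ∂gaussianReal 0 1
      = gaussianExpectation (P * He k) := by
    simp [gaussianExpectation_apply, hQP, aeval_hermite]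
  rw [hq, hcoeff]
  exact mul_nonneg (by positivity) (gaussianExpectation_mul_He_nonneg hP k)
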